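/- arXiv:2009.10055 — 6 statements merged into one kernel-verified Lean document; each statement's English description precedes it below -/
import Mathlib

section
/- Let G be a finite group of order 2k where k is odd. Then the commutator subgroup G' = [G,G] has odd order. -/
open Equiv Equiv.Perm

theorem commutator_card_odd_of_card_two_mul_odd
    (G : Type*) [Group G] [Fintype G] (k : ℕ) (hk : Odd k)
    (hG : Fintype.card G = 2 * k) :
    Odd (Nat.card (commutator G)) := by
  classical
  -- get an element of order 2
  obtain ⟨g, hg⟩ := exists_prime_orderOf_dvd_card 2 (by rw [hG]; exact Dvd.intro k rfl)
  -- the regular representation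
  set ρ : G →* Equiv.Perm G := MulAction.toPermHom G G
  set φ : G →* ℤˣ := (Equiv.Perm.sign).comp ρ
  have hρinj : Function.Injective ρ := MulAction.toPerm_injective
  have hgne : g ≠ 1 := by
    intro h; rw [h, orderOf_one] at hg; norm_num at hg
  have horder : orderOf (ρ g) = 2 := by
    rw [orderOf_injective ρ hρinj, hg]
  -- the permutation ρ g has no fixed points, so its support is everything
  have hsupp : (ρ g).support = Finset.univ := by
    ext x
    simp only [Equiv.Perm.mem_support, Finset.mem_univ, iff_true]
    show g • x ≠ x
    intro h
    exact hgne (by simpa using mul_right_cancel (by simpa [smul_eq_mul] using h : g * x = 1 * x))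
  -- every cycle length is 2
  have hct : ∀ n ∈ (ρ g).cycleType, n = 2 := by
    intro n hn
    have h2 : 2 ≤ n := Equiv.Perm.two_le_of_mem_cycleType hn
    have hd : n ∣ 2 := horder ▸ Equiv.Perm.dvd_of_mem_cycleType hn
    exact le_antisymm (Nat.le_of_dvd (by norm_num) hd) h2
  have hsum : (ρ g).cycleType.sum = 2 * k := by
    rw [Equiv.Perm.sum_cycleType, hsupp, Finset.card_univ, hG]
  have hcard : Multiset.card (ρ g).cycleType = k := by
    have hrep : (ρ g).cycleType = Multiset.replicate (Multiset.card (ρ g).cycleType) 2 :=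
      Multiset.eq_replicate_card.mpr hct
    have : (ρ g).cycleType.sum = Multiset.card (ρ g).cycleType * 2 := by
      conv_lhs => rw [hrep]
      rw [Multiset.sum_replicate, smul_eq_mul]
    omega
  have hsign : φ g = -1 := by
    show Equiv.Perm.sign (ρ g) = -1
    rw [Equiv.Perm.sign_of_cycleType, hsum, hcard]
    rw [Odd.neg_one_pow (by obtain ⟨m, hm⟩ := hk; exact ⟨k + m, by omega⟩)]
  -- φ is surjective
  have hsurj : Function.Surjective φ := by
    intro u
    rcases Int.units_eq_one_or u with rfl | rfl
    · exact ⟨1, map_one φ⟩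
    · exact ⟨g, hsign⟩
  have hker_index : φ.ker.index = 2 := by
    rw [Subgroup.index_ker, MonoidHom.range_eq_top.mpr hsurj]
    rw [Subgroup.card_top, Nat.card_eq_fintype_card, Fintype.card_units_int]
  have hker_card : Nat.card φ.ker = k := by
    have := Subgroup.card_mul_index φ.ker
    rw [hker_index, Nat.card_eq_fintype_card (α := G), hG] at this
    omega
  have hle : commutator G ≤ φ.ker := Abelianization.commutator_subset_ker φ
  have hdvd : Nat.card (commutator G) ∣ k := hker_card ▸ Subgroup.card_dvd_of_le hle
  rcases Nat.even_or_odd (Nat.card (commutator G)) with he | ho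
  · have h2 : 2 ∣ k := he.two_dvd.trans hdvd
    rw [Nat.odd_iff] at hk
    omega
  · exact ho
end

section
/- If G is a finite group generated by two elements a and b, and the commutator subgroup G' is cyclic, then G' is generated by the single commutator [a,b] = a b a⁻¹ b⁻¹. -/
set_option maxHeartbeats 1000000

open scoped commutatorElement

lemma aux_comm {Q : Type*} [Group Q] {x y : Q}
    (h : Subgroup.closure {x, y} = ⊤) (hc : Commute x y) :
    ∀ z w : Q, z * w = w * z := by
  have cen : ∀ v : Q, x * v = v * x → y * v = v * y → ∀ u : Q, u * v = v * u := by
    intro v hxv hyv u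
    have hsub : ({x, y} : Set Q) ⊆ Subgroup.centralizer {v} := by
      rintro s hs
      simp only [SetLike.mem_coe, Subgroup.mem_centralizer_iff]
      rintro m ⟨rfl⟩
      rcases hs with rfl | rfl
      · exact hxv.symm
      · exact hyv.symm
    have hu : u ∈ Subgroup.centralizer {v} := by
      have h2 := (Subgroup.closure_le _).2 hsub
      rw [h] at h2
      exact h2 trivial
    exact (Subgroup.mem_centralizer_iff.1 hu v rfl).symm
  have h1 : ∀ u : Q, u * x = x * u := cen x rfl hc.symm.eq
  have h2 : ∀ u : Q, u * y = y * u := cen y hc.eq rfl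
  intro z w
  exact cen w (h1 w).symm (h2 w).symm z

theorem commutator_eq_closure_commutatorElement
    (G : Type*) [Group G] [Fintype G] (a b : G)
    (hgen : Subgroup.closure {a, b} = ⊤)
    (hcyc : IsCyclic (commutator G)) :
    commutator G = Subgroup.closure {⁅a, b⁆} := by
  have hcmem : ⁅a, b⁆ ∈ commutator G :=
    Subgroup.commutator_mem_commutator (Subgroup.mem_top a) (Subgroup.mem_top b)
  have hKnormal : (commutator G).Normal := Subgroup.commutator_normal ⊤ ⊤
  -- conjugates of ⁅a,b⁆ are powers of ⁅a,b⁆, via cyclicity of the commutator subgroup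
  have hconj : ∀ g : G, ∃ m : ℤ, g * ⁅a, b⁆ * g⁻¹ = ⁅a, b⁆ ^ m := by
    intro g
    obtain ⟨m, hm⟩ := MonoidHom.map_cyclic
      (((MulAut.conj g).toMonoidHom.comp (commutator G).subtype).codRestrict _
        (fun x => hKnormal.conj_mem x.1 x.2 g))
    refine ⟨m, ?_⟩
    have h1 := congrArg Subtype.val (hm ⟨⁅a, b⁆, hcmem⟩)
    rw [SubgroupClass.coe_zpow] at h1
    exact h1
  rw [← Subgroup.zpowers_eq_closure]
  have hHnormal : (Subgroup.zpowers ⁅a, b⁆).Normal := by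
    constructor
    intro n hn g
    obtain ⟨k, rfl⟩ := hn
    obtain ⟨m, hm⟩ := hconj g
    have e : g * ⁅a, b⁆ ^ k * g⁻¹ = (g * ⁅a, b⁆ * g⁻¹) ^ k := (conj_zpow).symm
    rw [e, hm, ← zpow_mul]
    exact Subgroup.zpow_mem _ (Subgroup.mem_zpowers _) _
  have hHK : Subgroup.zpowers ⁅a, b⁆ ≤ commutator G := by
    rw [Subgroup.zpowers_eq_closure]
    exact (Subgroup.closure_le _).2 (by simpa using hcmem)
  refine le_antisymm ?_ hHK
  set f := QuotientGroup.mk' (Subgroup.zpowers ⁅a, b⁆) with hf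
  have hone : f ⁅a, b⁆ = 1 := (QuotientGroup.eq_one_iff _).2 (Subgroup.mem_zpowers _)
  have hcomm : Commute (f a) (f b) := by
    have h1 : f a * f b * (f a)⁻¹ * (f b)⁻¹ = 1 := by
      simpa [commutatorElement_def] using hone
    show f a * f b = f b * f a
    calc f a * f b = (f a * f b * (f a)⁻¹ * (f b)⁻¹) * (f b * f a) := by group
    _ = f b * f a := by rw [h1]; group
  have hgenQ : Subgroup.closure {f a, f b} = ⊤ := by
    have hmap := Subgroup.map_top_of_surjective f (QuotientGroup.mk'_surjective _)
    rw [← hgen, MonoidHom.map_closure f] at hmap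
    rw [← hmap]
    congr 1
    simp [Set.image_insert_eq]
  have habelian := aux_comm hgenQ hcomm
  rw [commutator_def]
  refine Subgroup.commutator_le.2 ?_
  intro g _ h _
  rw [← QuotientGroup.eq_one_iff (N := Subgroup.zpowers ⁅a, b⁆)]
  show f ⁅g, h⁆ = 1
  rw [map_commutatorElement]
  exact commutatorElement_eq_one_iff_commute.2 (habelian (f g) (f h))
end

section
/- Let G be a finite group whose order is square-free. Then the commutator subgroup G' and the quotient G/G' are both cyclic. -/
open Subgroup

universe u

private lemma sqf_dvd_of_primes {n m : ℕ} (hn : Squarefree n)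
    (h : ∀ p : ℕ, p.Prime → p ∣ n → p ∣ m) : n ∣ m := by
  rw [← Nat.prod_primeFactors_of_squarefree hn]
  exact Finset.prod_primes_dvd m
    (fun p hp => (Nat.prime_of_mem_primeFactors hp).prime)
    (fun p hp => h p (Nat.prime_of_mem_primeFactors hp) (Nat.dvd_of_mem_primeFactors hp))

private lemma cyclic_of_comm_squarefree (G : Type u) [CommGroup G] [Finite G]
    (h : Squarefree (Nat.card G)) : IsCyclic G := by
  have h1 : Nat.card G ∣ Monoid.exponent G := by
    apply sqf_dvd_of_primes h
    intro p hp hdvd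
    haveI : Fact p.Prime := ⟨hp⟩
    obtain ⟨g, hg⟩ := exists_prime_orderOf_dvd_card' p hdvd
    exact hg ▸ Monoid.order_dvd_exponent g
  have h2 : Monoid.exponent G ∣ Nat.card G := Group.exponent_dvd_nat_card
  obtain ⟨g, hg⟩ := Monoid.exists_orderOf_eq_exponent (G := G) Monoid.ExponentExists.of_finite
  exact isCyclic_of_orderOf_eq_card g (by rw [hg]; exact Nat.dvd_antisymm h2 h1)

private lemma mulAut_mul_comm {P : Type*} [Group P] (h : IsCyclic P) (a b : MulAut P) :
    a * b = b * a := by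
  obtain ⟨g, hg⟩ := h
  obtain ⟨m, hm⟩ := hg (a g)
  obtain ⟨n, hn⟩ := hg (b g)
  simp only at hm hn
  ext x
  obtain ⟨k, rfl⟩ := hg x
  simp only
  show a (b (g ^ k)) = b (a (g ^ k))
  rw [map_zpow, ← hn, ← zpow_mul, map_zpow, ← hm, ← zpow_mul,
    map_zpow, ← hm, ← zpow_mul, map_zpow, ← hn, ← zpow_mul]
  ring_nf




private lemma norm_le_cent (G : Type u) [Group G] [Finite G] {q : ℕ} [hqf : Fact q.Prime]
    (Q : Sylow q G) (hQ : Nat.card (Q : Subgroup G) = q)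
    (hmin : ∀ r : ℕ, r.Prime → r ∣ Nat.card G → q ≤ r) :
    Subgroup.normalizer (Q : Set G) ≤ Subgroup.centralizer (Q : Set G) := by
  set f := (Q : Subgroup G).normalizerMonoidHom with hf
  have hcyc : IsCyclic (Q : Subgroup G) := isCyclic_of_prime_card hQ
  have hAut : Nat.card (MulAut (Q : Subgroup G)) = q - 1 := by
    rw [hcyc.card_mulAut, hQ, Nat.totient_prime hqf.out]
  have h1 : Nat.card f.range ∣ q - 1 := hAut ▸ Subgroup.card_subgroup_dvd_card f.range
  have h2 : Nat.card f.range ∣ Nat.card G := by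
    have e1 : Nat.card f.range = Nat.card (Subgroup.normalizer (Q : Set G) ⧸ f.ker) :=
      (Nat.card_congr (QuotientGroup.quotientKerEquivRange f).toEquiv).symm
    rw [e1]
    exact (Subgroup.card_quotient_dvd_card f.ker).trans
      (Subgroup.card_subgroup_dvd_card _)
  have hone : Nat.card f.range = 1 := by
    by_contra hc
    have hpos : 0 < Nat.card f.range := Nat.card_pos
    have hr := Nat.minFac_prime hc
    have hr1 : (Nat.card f.range).minFac ∣ q - 1 := (Nat.minFac_dvd _).trans h1
    have hr2 : (Nat.card f.range).minFac ∣ Nat.card G := (Nat.minFac_dvd _).trans h2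
    have hq1 : 0 < q - 1 := by have := hqf.out.two_le; omega
    have := Nat.le_of_dvd hq1 hr1
    have := hmin _ hr hr2
    omega
  have hker : f.ker = ⊤ := by
    have : f.range = ⊥ := Subgroup.card_eq_one.mp hone
    rw [eq_top_iff]
    intro x _
    have hx : f x ∈ (⊥ : Subgroup (MulAut (Q : Subgroup G))) := this ▸ ⟨x, rfl⟩
    exact Subgroup.mem_bot.mp hx
  intro x hx
  have : (⟨x, hx⟩ : Subgroup.normalizer (Q : Set G)) ∈ f.ker := hker ▸ Subgroup.mem_top _
  rw [hf, Subgroup.normalizerMonoidHom_ker, Subgroup.mem_subgroupOf] at this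
  exact this






private lemma sylow_card_eq {G : Type u} [Group G] [Finite G] {p : ℕ} [Fact p.Prime]
    (P : Sylow p G) (hsq : Squarefree (Nat.card G)) (hdvd : p ∣ Nat.card G) :
    Nat.card (P : Subgroup G) = p := by
  rw [Sylow.card_eq_multiplicity]
  have h1 : (Nat.card G).factorization p ≤ 1 := hsq.natFactorization_le_one p
  have h2 : 1 ≤ (Nat.card G).factorization p :=
    ((Fact.out : p.Prime).dvd_iff_one_le_factorization hsq.ne_zero).mp hdvd
  rw [le_antisymm h1 h2, pow_one]

private lemma exists_normal_of_max_prime :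
    ∀ n : ℕ, ∀ (G : Type u) [Group G] [Finite G], Nat.card G = n →
      Squarefree n → ∀ p : ℕ, p.Prime → p ∣ n → (∀ r : ℕ, r.Prime → r ∣ n → r ≤ p) →
      ∃ P : Subgroup G, P.Normal ∧ Nat.card P = p := by
  intro n
  induction n using Nat.strong_induction_on with
  | _ n ih =>
  intro G _ _ hcard hsq p hp hpn hmax
  have hn0 : n ≠ 0 := hsq.ne_zero
  have hn1 : n ≠ 1 := by
    rintro rfl
    exact hp.one_lt.ne' (Nat.eq_one_of_dvd_one hpn)
  by_cases hnp : n = p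
  · refine ⟨⊤, inferInstance, ?_⟩
    rw [Nat.card_congr Subgroup.topEquiv.toEquiv, hcard, hnp]
  · set q := n.minFac with hq_def
    have hq : q.Prime := Nat.minFac_prime hn1
    have hqn : q ∣ n := Nat.minFac_dvd n
    have hqp : q ≠ p := by
      rintro rfl
      apply hnp
      have hfac : n.primeFactors = {q} := by
        ext r
        simp only [Nat.mem_primeFactors, Finset.mem_singleton]
        constructor
        · rintro ⟨hr, hrn, -⟩
          exact le_antisymm (hmax r hr hrn) (Nat.minFac_le_of_dvd hr.two_le hrn)
        · rintro rfl; exact ⟨hq, hqn, hn0⟩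
      have := Nat.prod_primeFactors_of_squarefree hsq
      rw [hfac, Finset.prod_singleton] at this
      exact this.symm
    have hqlt : q < p := lt_of_le_of_ne (hmax q hq hqn) hqp
    haveI : Fact q.Prime := ⟨hq⟩
    let Q : Sylow q G := default
    have hQcard : Nat.card (Q : Subgroup G) = q :=
      sylow_card_eq Q (hcard ▸ hsq) (hcard ▸ hqn)
    have hNC := norm_le_cent G Q hQcard
      (fun r hr hrn => Nat.minFac_le_of_dvd hr.two_le (hcard ▸ hrn))
    have hcompl := MonoidHom.ker_transferSylow_isComplement' Q hNC
    set K := (MonoidHom.transferSylow Q hNC).ker with hK_def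
    have hKmul : Nat.card K * q = n := by
      have := hcompl.card_mul
      rwa [hQcard, hcard] at this
    have hKlt : Nat.card K < n := by
      have := hq.one_lt
      nlinarith [Nat.card_pos (α := K)]
    have hKdvd : Nat.card K ∣ n := ⟨q, hKmul.symm⟩
    have hKsq : Squarefree (Nat.card K) := hsq.squarefree_of_dvd ⟨q, hKmul.symm⟩
    have hpK : p ∣ Nat.card K := by
      have hpn' : p ∣ Nat.card K * q := hKmul.symm ▸ hpn
      exact (Nat.Coprime.dvd_of_dvd_mul_right
        ((Nat.coprime_primes hp hq).mpr (Ne.symm hqp)) hpn')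
    obtain ⟨P₀, hP₀norm, hP₀card⟩ := ih (Nat.card K) hKlt K rfl hKsq p hp hpK
      (fun r hr hrn => hmax r hr (hrn.trans ⟨q, hKmul.symm⟩))
    haveI : Fact p.Prime := ⟨hp⟩
    have hP₀card' : Nat.card P₀ = p ^ (Nat.card K).factorization p := by
      rw [hP₀card]
      have h1 : (Nat.card K).factorization p ≤ 1 := hKsq.natFactorization_le_one p
      have h2 : 1 ≤ (Nat.card K).factorization p :=
        (hp.dvd_iff_one_le_factorization hKsq.ne_zero).mp hpK
      rw [le_antisymm h1 h2, pow_one]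
    let P' : Sylow p K := Sylow.ofCard P₀ hP₀card'
    have hP'eq : (P' : Subgroup K) = P₀ := Sylow.coe_ofCard P₀ hP₀card'
    haveI : (P' : Subgroup K).Characteristic :=
      Sylow.characteristic_of_normal P' (hP'eq ▸ hP₀norm)
    refine ⟨(P' : Subgroup K).map K.subtype, inferInstance, ?_⟩
    rw [Nat.card_congr (Subgroup.equivMapOfInjective _ _ K.subtype_injective).toEquiv.symm,
      hP'eq, hP₀card]







private lemma commutator_cyclic : ∀ n : ℕ, ∀ (G : Type u) [Group G] [Finite G],
    Nat.card G = n → Squarefree n → IsCyclic (commutator G) := by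
  intro n
  induction n using Nat.strong_induction_on with
  | _ n ih =>
  intro G _ _ hcard hsq
  rcases eq_or_ne n 1 with rfl | hn1
  · haveI : Subsingleton G := (Nat.card_eq_one_iff_unique.mp hcard).1
    infer_instance
  · have hn0 : n ≠ 0 := hsq.ne_zero
    have hne : n.primeFactors.Nonempty :=
      Nat.nonempty_primeFactors.mpr (by omega)
    set p := n.primeFactors.max' hne with hp_def
    have hpmem := n.primeFactors.max'_mem hne
    have hp : p.Prime := Nat.prime_of_mem_primeFactors hpmem
    have hpn : p ∣ n := Nat.dvd_of_mem_primeFactors hpmem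
    have hmax : ∀ r : ℕ, r.Prime → r ∣ n → r ≤ p := fun r hr hrn =>
      Finset.le_max' _ _ (Nat.mem_primeFactors.mpr ⟨hr, hrn, hn0⟩)
    obtain ⟨P, hPnorm, hPcard⟩ := exists_normal_of_max_prime n G hcard hsq p hp hpn hmax
    haveI := hPnorm
    haveI : Fact p.Prime := ⟨hp⟩
    have hPcyc : IsCyclic P := isCyclic_of_prime_card hPcard
    letI : CommGroup (MulAut P) :=
      { (inferInstance : Group (MulAut P)) with mul_comm := mulAut_mul_comm hPcyc }
    have hcent : commutator G ≤ (MulAut.conjNormal (H := P)).ker :=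
      Abelianization.commutator_subset_ker _
    -- quotient is smaller
    have hcardmul : Nat.card (G ⧸ P) * p = n := by
      have := Subgroup.card_eq_card_quotient_mul_card_subgroup P
      rw [hPcard, hcard] at this
      omega
    have hqlt : Nat.card (G ⧸ P) < n := by
      have := hp.one_lt
      nlinarith [Nat.card_pos (α := G ⧸ P)]
    have hqsq : Squarefree (Nat.card (G ⧸ P)) := hsq.squarefree_of_dvd ⟨p, hcardmul.symm⟩
    haveI hquot : IsCyclic (commutator (G ⧸ P)) :=
      ih (Nat.card (G ⧸ P)) hqlt (G ⧸ P) rfl hqsq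
    set π := QuotientGroup.mk' P with hπ
    have hmapc : (commutator G).map π = commutator (G ⧸ P) := by
      rw [commutator_def, commutator_def, Subgroup.map_commutator,
        Subgroup.map_top_of_surjective π (QuotientGroup.mk'_surjective P)]
    let φ : ↥(commutator G) →* ↥(commutator (G ⧸ P)) :=
      (π.domRestrict (commutator G)).codRestrict _
        (fun x => hmapc ▸ Subgroup.mem_map_of_mem π x.2)
    have hker : φ.ker ≤ Subgroup.center ↥(commutator G) := by
      intro x hx
      have hx1 : π (x : G) = 1 := by
        have : φ x = 1 := hx
        exact congrArg Subtype.val this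
      have hxP : (x : G) ∈ P := by
        rwa [hπ, QuotientGroup.mk'_apply, QuotientGroup.eq_one_iff] at hx1
      rw [Subgroup.mem_center_iff]
      intro h
      have hhk : MulAut.conjNormal (H := P) (h : G) = 1 := hcent h.2
      have : ((MulAut.conjNormal (H := P) (h : G)) ⟨(x : G), hxP⟩ : G)
          = ((x : G)) := by rw [hhk]; rfl
      rw [MulAut.conjNormal_apply] at this
      have hcomm : (h : G) * (x : G) = (x : G) * (h : G) :=
        mul_inv_eq_iff_eq_mul.mp this
      exact Subtype.ext hcomm
    have hcomm2 : ∀ a b : ↥(commutator G), a * b = b * a :=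
      commutative_of_cyclic_center_quotient φ hker
    letI : CommGroup ↥(commutator G) :=
      { (inferInstance : Group ↥(commutator G)) with mul_comm := hcomm2 }
    exact cyclic_of_comm_squarefree _
      (hsq.squarefree_of_dvd (hcard ▸ Subgroup.card_subgroup_dvd_card _))

theorem commutator_and_quotient_cyclic_of_squarefree
    (G : Type*) [Group G] [Fintype G]
    (hG : Squarefree (Fintype.card G)) :
    IsCyclic (commutator G) ∧ IsCyclic (G ⧸ commutator G) := by
  have hsq : Squarefree (Nat.card G) := by rwa [Nat.card_eq_fintype_card]
  constructor
  · exact commutator_cyclic (Nat.card G) G rfl hsq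
  · have h2 : Squarefree (Nat.card (G ⧸ commutator G)) :=
      hsq.squarefree_of_dvd (Subgroup.card_quotient_dvd_card _)
    have : IsCyclic (Abelianization G) := cyclic_of_comm_squarefree (Abelianization G) h2
    exact this
end

section
/- Let G be a finite group whose order is square-free. Then Z(G) ∩ G' = {e}, where Z(G) is the center and G' the commutator subgroup. -/
theorem center_inf_commutator_eq_bot_of_squarefree
    (G : Type*) [Group G] [Fintype G]
    (hG : Squarefree (Fintype.card G)) :
    Subgroup.center G ⊓ commutator G = ⊥ := by
  rw [Subgroup.eq_bot_iff_forall]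
  rintro g ⟨hgZ, hgC⟩
  have hFI : (Subgroup.center G).FiniteIndex := inferInstance
  -- transfer kills the commutator subgroup
  have h1 : MonoidHom.transferCenterPow G g = 1 := by
    have : commutator G ≤ (MonoidHom.transferCenterPow G).ker :=
      open scoped IsMulCommutative in Abelianization.commutator_subset_ker _
    exact this hgC
  have h2 : g ^ (Subgroup.center G).index = 1 := by
    have := congrArg Subtype.val h1
    rwa [MonoidHom.transferCenterPow_apply] at this
  have hd1 : orderOf g ∣ (Subgroup.center G).index := orderOf_dvd_of_pow_eq_one h2
  have hd2 : orderOf g ∣ Nat.card (Subgroup.center G) :=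
    (Subgroup.center G).orderOf_dvd_natCard hgZ
  have hmul : Nat.card (Subgroup.center G) * (Subgroup.center G).index =
      Fintype.card G := by
    rw [← Nat.card_eq_fintype_card]
    exact Subgroup.card_mul_index _
  have hcop : Nat.Coprime (Nat.card (Subgroup.center G)) (Subgroup.center G).index := by
    have := hG
    rw [← hmul, Nat.squarefree_mul_iff] at this
    exact this.1
  have : orderOf g ∣ 1 := hcop ▸ Nat.dvd_gcd hd2 hd1
  exact orderOf_eq_one_iff.mp (Nat.dvd_one.mp this)
end

section
/- Let G be a finite group of square-free order with G' cyclic of order m generated by γ, and let b ∈ G map to a generator of G/G', with |b| = n. Then there is an integer τ with b γ b⁻¹ = γ^τ, mn = |G|, gcd(τ − 1, m) = 1, and τ^n ≡ 1 (mod m). -/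
theorem exists_tau_of_squarefree
    (G : Type*) [Group G] [Fintype G]
    (hG : Squarefree (Fintype.card G)) (b γ : G) (m n : ℕ)
    (hb : Subgroup.zpowers ((QuotientGroup.mk b : G ⧸ commutator G)) = ⊤)
    (hγ : Subgroup.zpowers γ = commutator G)
    (hm : orderOf γ = m) (hn : orderOf b = n) :
    ∃ τ : ℤ, b * γ * b⁻¹ = γ ^ τ ∧ m * n = Fintype.card G ∧
      Int.gcd (τ - 1) m = 1 ∧ τ ^ n ≡ 1 [ZMOD (m : ℤ)] := by
  classical
  have hγmem : γ ∈ commutator G := hγ ▸ Subgroup.mem_zpowers γ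
  -- existence of τ
  obtain ⟨τ, hτ⟩ : ∃ τ : ℤ, γ ^ τ = b * γ * b⁻¹ :=
    Subgroup.mem_zpowers_iff.mp
      (hγ ▸ (Subgroup.commutator_normal ⊤ ⊤).conj_mem γ hγmem b)
  -- H := zpowers (γ ^ (τ - 1)) is normal
  have hnormal : (Subgroup.zpowers (γ ^ (τ - 1))).Normal := by
    constructor
    intro x hx g
    obtain ⟨t, ht⟩ := Subgroup.mem_zpowers_iff.mp hx
    obtain ⟨u, hu⟩ : ∃ u : ℤ, γ ^ u = g * γ * g⁻¹ :=
      Subgroup.mem_zpowers_iff.mp (hγ ▸ (Subgroup.commutator_normal ⊤ ⊤).conj_mem γ hγmem g)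
    refine Subgroup.mem_zpowers_iff.mpr ⟨u * t, ?_⟩
    subst ht
    calc (γ ^ (τ - 1)) ^ (u * t) = (γ ^ u) ^ ((τ - 1) * t) := by
          rw [← zpow_mul, ← zpow_mul]; ring_nf
      _ = (g * γ * g⁻¹) ^ ((τ - 1) * t) := by rw [hu]
      _ = g * γ ^ ((τ - 1) * t) * g⁻¹ := conj_zpow
      _ = g * (γ ^ (τ - 1)) ^ t * g⁻¹ := by rw [zpow_mul]
  letI := hnormal
  -- every element is b ^ i * γ ^ j
  have rep : ∀ g : G, ∃ (i j : ℤ), g = b ^ i * γ ^ j := by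
    intro g
    have hmem : (QuotientGroup.mk g : G ⧸ commutator G) ∈
        Subgroup.zpowers ((QuotientGroup.mk b : G ⧸ commutator G)) := by
      rw [hb]; trivial
    obtain ⟨i, hi⟩ := Subgroup.mem_zpowers_iff.mp hmem
    have hmk : (QuotientGroup.mk (b ^ i) : G ⧸ commutator G) = QuotientGroup.mk g := by
      rw [← hi]; rfl
    have h2 : (b ^ i)⁻¹ * g ∈ commutator G := QuotientGroup.eq.mp hmk
    rw [← hγ] at h2
    obtain ⟨j, hj⟩ := Subgroup.mem_zpowers_iff.mp h2
    exact ⟨i, j, by rw [hj, mul_inv_cancel_left]⟩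
  -- commutator G ≤ zpowers (γ ^ (τ - 1))
  have hle : commutator G ≤ Subgroup.zpowers (γ ^ (τ - 1)) := by
    rw [commutator_def, Subgroup.commutator_le]
    intro g _ h _
    set H := Subgroup.zpowers (γ ^ (τ - 1)) with hH
    let π := QuotientGroup.mk' H
    have hone : π (γ ^ (τ - 1)) = 1 :=
      (QuotientGroup.eq_one_iff _).mpr (Subgroup.mem_zpowers _)
    have hγτ : (π γ) ^ (τ - 1) = 1 := by rw [← map_zpow]; exact hone
    have hcomm : Commute (π b) (π γ) := by
      have h1 : π b * π γ * (π b)⁻¹ = (π γ) ^ τ := by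
        rw [← map_zpow, hτ, map_mul, map_mul, map_inv]
      have h2 : (π γ) ^ τ = π γ := by
        have : (τ : ℤ) = 1 + (τ - 1) := by ring
        rw [this, zpow_add, zpow_one, hγτ, mul_one]
      have h3 : π b * π γ * (π b)⁻¹ = π γ := h1.trans h2
      have := mul_inv_eq_iff_eq_mul.mp h3
      exact this
    obtain ⟨i, j, hg⟩ := rep g
    obtain ⟨k, l, hh⟩ := rep h
    have hB : Commute (π b) ((π b) ^ k * (π γ) ^ l) :=
      (((Commute.refl (π b)).zpow_right k).mul_right (hcomm.zpow_right l))
    have hC : Commute (π γ) ((π b) ^ k * (π γ) ^ l) :=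
      ((hcomm.symm.zpow_right k).mul_right ((Commute.refl (π γ)).zpow_right l))
    have hfinal : Commute ((π b) ^ i * (π γ) ^ j) ((π b) ^ k * (π γ) ^ l) :=
      (hB.zpow_left i).mul_left (hC.zpow_left j)
    open scoped commutatorElement in
    have : π ⁅g, h⁆ = 1 := by
      rw [map_commutatorElement, commutatorElement_eq_one_iff_commute, hg, hh,
        map_mul, map_mul, map_zpow, map_zpow, map_zpow, map_zpow]
      exact hfinal
    exact (QuotientGroup.eq_one_iff _).mp this
  -- gcd (τ - 1) m = 1
  obtain ⟨t, ht⟩ := Subgroup.mem_zpowers_iff.mp (hle hγmem)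
  have hdvd : (m : ℤ) ∣ (τ - 1) * t - 1 := by
    rw [← hm, orderOf_dvd_iff_zpow_eq_one, zpow_sub, zpow_one, zpow_mul, ht,
      mul_inv_cancel]
  obtain ⟨u, hu⟩ := hdvd
  have hcop : IsCoprime (τ - 1) (m : ℤ) := ⟨t, -u, by linear_combination hu⟩
  have hgcd : Int.gcd (τ - 1) m = 1 := Int.isCoprime_iff_gcd_eq_one.mp hcop
  -- m * n = card G
  have hcardcomm : Nat.card (commutator G) = m := by
    rw [← hγ, Nat.card_zpowers, hm]
  set k := Nat.card (G ⧸ commutator G) with hkdef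
  have hk : orderOf (QuotientGroup.mk b : G ⧸ commutator G) = k := by
    rw [← Nat.card_zpowers, hb]
    exact Nat.card_congr Subgroup.topEquiv.toEquiv
  have hbk : b ^ k ∈ commutator G := by
    rw [← QuotientGroup.eq_one_iff]
    have : (QuotientGroup.mk b : G ⧸ commutator G) ^ k = 1 := by
      rw [← hk]; exact pow_orderOf_eq_one _
    simpa using this
  rw [← hγ] at hbk
  obtain ⟨s, hs⟩ := Subgroup.mem_zpowers_iff.mp hbk
  have hfix : γ ^ (τ * s) = γ ^ s := by
    calc γ ^ (τ * s) = (γ ^ τ) ^ s := by rw [zpow_mul]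
      _ = b * γ ^ s * b⁻¹ := by rw [hτ, conj_zpow]
      _ = b * b ^ (k : ℤ) * b⁻¹ := by rw [hs, zpow_natCast]
      _ = b ^ (k : ℤ) := by group
      _ = γ ^ s := by rw [zpow_natCast, hs]
  have hdvd2 : (m : ℤ) ∣ s * (τ - 1) := by
    rw [← hm, orderOf_dvd_iff_zpow_eq_one]
    have : s * (τ - 1) = τ * s - s := by ring
    rw [this, zpow_sub, hfix, mul_inv_cancel]
  have hms : (m : ℤ) ∣ s := (hcop.symm).dvd_of_dvd_mul_right hdvd2
  have hγs : γ ^ s = 1 := by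
    rw [← orderOf_dvd_iff_zpow_eq_one, hm]; exact hms
  have hbk1 : b ^ k = 1 := by rw [← hs, hγs]
  have hnk : n ∣ k := hn ▸ orderOf_dvd_of_pow_eq_one hbk1
  have hkn : k ∣ n := by
    rw [← hk, ← hn]
    exact orderOf_map_dvd (QuotientGroup.mk' (commutator G)) b
  have hkeq : k = n := Nat.dvd_antisymm hkn hnk
  have hcard : m * n = Fintype.card G := by
    rw [← Nat.card_eq_fintype_card, Subgroup.card_eq_card_quotient_mul_card_subgroup
      (commutator G), hcardcomm, ← hkdef, hkeq, mul_comm]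
  -- τ ^ n ≡ 1 [ZMOD m]
  have hpow : ∀ j : ℕ, b ^ j * γ * (b ^ j)⁻¹ = γ ^ (τ ^ j) := by
    intro j
    induction j with
    | zero => simp
    | succ j ih =>
      have : b ^ (j + 1) = b * b ^ j := by rw [pow_succ']
      rw [this, mul_inv_rev, pow_succ']
      calc b * b ^ j * γ * ((b ^ j)⁻¹ * b⁻¹)
          = b * (b ^ j * γ * (b ^ j)⁻¹) * b⁻¹ := by group
        _ = b * γ ^ (τ ^ j) * b⁻¹ := by rw [ih]
        _ = (b * γ * b⁻¹) ^ (τ ^ j) := by rw [conj_zpow]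
        _ = γ ^ (τ * τ ^ j) := by rw [← hτ, ← zpow_mul]
  have hτn : γ ^ (τ ^ n) = γ := by
    rw [← hpow n, ← hn, pow_orderOf_eq_one]
    simp
  have hmod : τ ^ n ≡ 1 [ZMOD (m : ℤ)] := by
    rw [Int.modEq_iff_dvd, ← hm, orderOf_dvd_iff_zpow_eq_one, zpow_sub, zpow_one,
      hτn, mul_inv_cancel]
  exact ⟨τ, hτ.symm, hcard, hgcd, hmod⟩
end

section
/- Let G be a finite group and let S = {s₁, …, s₄} be a minimal generating set of G with 4 elements, where |G| is a product of four distinct primes. Then every element of S has prime order. -/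
open ArithmeticFunction ArithmeticFunction.Omega in
private lemma omega_one_le {k : ℕ} (hk : 2 ≤ k) : 1 ≤ Ω k := by
  obtain ⟨p, hp, m, rfl⟩ : ∃ p, p.Prime ∧ ∃ m, k = p * m := by
    obtain ⟨p, hp, hpd⟩ := Nat.exists_prime_and_dvd (by omega : k ≠ 1)
    exact ⟨p, hp, hpd⟩
  have hm : m ≠ 0 := by rintro rfl; omega
  rw [cardFactors_mul hp.ne_zero hm, cardFactors_apply_prime hp]
  omega

open ArithmeticFunction ArithmeticFunction.Omega in
private lemma omega_lt_omega {a b : ℕ} (hab : a ∣ b) (h : a < b) (hb : b ≠ 0) :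
    Ω a < Ω b := by
  obtain ⟨k, rfl⟩ := hab
  have ha : a ≠ 0 := by rintro rfl; simp at h
  have hk : 2 ≤ k := by
    rcases Nat.lt_or_ge k 2 with h2 | h2
    · interval_cases k <;> omega
    · exact h2
  rw [cardFactors_mul ha (by omega)]
  have := omega_one_le hk
  omega

private lemma card_lt_of_lt {G : Type*} [Group G] [Finite G] {H K : Subgroup G}
    (h : H < K) : Nat.card H < Nat.card K := by
  have h' : (H : Set G) ⊂ (K : Set G) := by exact_mod_cast h
  simp only [← SetLike.coe_sort_coe, Nat.card_coe_set_eq]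
  exact Set.ncard_lt_ncard h' (Set.toFinite _)

theorem minimal_gen_set_elements_prime_order
    (G : Type*) [Group G] [Fintype G] [DecidableEq G]
    (p₁ p₂ p₃ p₄ : ℕ) (h₁ : p₁.Prime) (h₂ : p₂.Prime) (h₃ : p₃.Prime)
    (h₄ : p₄.Prime) (h₁₂ : p₁ ≠ p₂) (h₁₃ : p₁ ≠ p₃) (h₁₄ : p₁ ≠ p₄)
    (h₂₃ : p₂ ≠ p₃) (h₂₄ : p₂ ≠ p₄) (h₃₄ : p₃ ≠ p₄)
    (hcard : Fintype.card G = p₁ * p₂ * p₃ * p₄)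
    (S : Finset G) (hS4 : S.card = 4)
    (hgen : Subgroup.closure (S : Set G) = ⊤)
    (hmin : ∀ T : Finset G, T ⊂ S → Subgroup.closure (T : Set G) ≠ ⊤) :
    ∀ s ∈ S, (orderOf s).Prime := by
  intro s hs
  open ArithmeticFunction ArithmeticFunction.Omega in
  -- key fact: an element of S is never in the closure of the others
  have hclo : ∀ t ∈ S, t ∉ Subgroup.closure ((S.erase t : Finset G) : Set G) := by
    intro t ht hmem
    apply hmin (S.erase t) (Finset.erase_ssubset ht)
    rw [eq_top_iff, ← hgen]
    apply (Subgroup.closure_le _).2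
    intro x hx
    by_cases hxt : x = t
    · subst hxt; exact hmem
    · exact Subgroup.subset_closure (Finset.mem_erase.2 ⟨hxt, hx⟩)
  have h3 : (S.erase s).card = 3 := by
    rw [Finset.card_erase_of_mem hs, hS4]
  obtain ⟨a, b, c, hab, hac, hbc, habc⟩ := Finset.card_eq_three.mp h3
  have hamem : a ∈ S.erase s := by rw [habc]; simp
  have hbmem : b ∈ S.erase s := by rw [habc]; simp
  have hcmem : c ∈ S.erase s := by rw [habc]; simp
  have haS : a ∈ S := Finset.mem_of_mem_erase hamem
  have hbS : b ∈ S := Finset.mem_of_mem_erase hbmem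
  have hcS : c ∈ S := Finset.mem_of_mem_erase hcmem
  have has : a ≠ s := (Finset.mem_erase.1 hamem).1
  have hbs : b ≠ s := (Finset.mem_erase.1 hbmem).1
  have hcs : c ≠ s := (Finset.mem_erase.1 hcmem).1
  set H₁ : Subgroup G := Subgroup.closure {s} with hH₁
  set H₂ : Subgroup G := Subgroup.closure {s, a} with hH₂
  set H₃ : Subgroup G := Subgroup.closure {s, a, b} with hH₃
  -- subset facts
  have hsub2 : ({s, a} : Set G) ⊆ (S.erase b : Finset G) := by
    intro x hx
    rcases hx with rfl | rfl
    · exact Finset.mem_coe.2 (Finset.mem_erase.2 ⟨hbs.symm, hs⟩)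
    · exact Finset.mem_coe.2 (Finset.mem_erase.2 ⟨hab, haS⟩)
  have hsub3 : ({s, a, b} : Set G) ⊆ (S.erase c : Finset G) := by
    intro x hx
    rcases hx with rfl | rfl | rfl
    · exact Finset.mem_coe.2 (Finset.mem_erase.2 ⟨hcs.symm, hs⟩)
    · exact Finset.mem_coe.2 (Finset.mem_erase.2 ⟨hac, haS⟩)
    · exact Finset.mem_coe.2 (Finset.mem_erase.2 ⟨hbc, hbS⟩)
  -- non-membership facts
  have hna : a ∉ H₁ := by
    intro hmem
    refine hclo a haS (Subgroup.closure_mono ?_ hmem)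
    intro x hx
    rcases hx with rfl
    exact Finset.mem_coe.2 (Finset.mem_erase.2 ⟨has.symm, hs⟩)
  have hnb : b ∉ H₂ := fun hmem => hclo b hbS (Subgroup.closure_mono hsub2 hmem)
  have hnc : c ∉ H₃ := fun hmem => hclo c hcS (Subgroup.closure_mono hsub3 hmem)
  -- strict chain
  have h12 : H₁ < H₂ := by
    refine lt_of_le_of_ne (Subgroup.closure_mono (by simp)) fun he => ?_
    exact hna (he ▸ Subgroup.subset_closure (by simp))
  have h23 : H₂ < H₃ := by
    refine lt_of_le_of_ne (Subgroup.closure_mono (by intro x hx; simp at hx ⊢; tauto))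
      fun he => ?_
    exact hnb (he ▸ Subgroup.subset_closure (by simp))
  have h34 : H₃ < ⊤ := lt_top_iff_ne_top.2 fun he => hnc (he ▸ Subgroup.mem_top c)
  -- cardinalities
  have d12 : Nat.card H₁ < Nat.card H₂ := card_lt_of_lt h12
  have d23 : Nat.card H₂ < Nat.card H₃ := card_lt_of_lt h23
  have d34 : Nat.card H₃ < Nat.card G := by
    have := card_lt_of_lt h34
    rwa [Nat.card_congr Subgroup.topEquiv.toEquiv] at this
  have v12 : Nat.card H₁ ∣ Nat.card H₂ := Subgroup.card_dvd_of_le h12.le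
  have v23 : Nat.card H₂ ∣ Nat.card H₃ := Subgroup.card_dvd_of_le h23.le
  have v34 : Nat.card H₃ ∣ Nat.card G := by
    have := Subgroup.card_dvd_of_le h34.le
    rwa [Nat.card_congr Subgroup.topEquiv.toEquiv] at this
  have hG0 : Nat.card G ≠ 0 := Nat.card_pos.ne'
  have hΩG : Ω (Nat.card G) = 4 := by
    rw [Nat.card_eq_fintype_card, hcard,
      cardFactors_mul (Nat.mul_ne_zero (Nat.mul_ne_zero h₁.ne_zero h₂.ne_zero) h₃.ne_zero) h₄.ne_zero,
      cardFactors_mul (Nat.mul_ne_zero h₁.ne_zero h₂.ne_zero) h₃.ne_zero,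
      cardFactors_mul h₁.ne_zero h₂.ne_zero,
      cardFactors_apply_prime h₁, cardFactors_apply_prime h₂,
      cardFactors_apply_prime h₃, cardFactors_apply_prime h₄]
  have o12 : Ω (Nat.card H₁) < Ω (Nat.card H₂) :=
    omega_lt_omega v12 d12 Nat.card_pos.ne'
  have o23 : Ω (Nat.card H₂) < Ω (Nat.card H₃) :=
    omega_lt_omega v23 d23 Nat.card_pos.ne'
  have o34 : Ω (Nat.card H₃) < Ω (Nat.card G) :=
    omega_lt_omega v34 d34 hG0
  -- order of s
  have hord : Nat.card H₁ = orderOf s := by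
    rw [hH₁, ← Subgroup.zpowers_eq_closure, Nat.card_zpowers]
  have hs1 : s ≠ 1 := by
    intro h
    exact hclo s hs (h ▸ (Subgroup.closure _).one_mem)
  have hord2 : 2 ≤ Nat.card H₁ := by
    rw [hord]
    have h0 : orderOf s ≠ 0 := by
      have : IsOfFinOrder s := isOfFinOrder_of_finite s
      exact this.orderOf_pos.ne'
    have h1 : orderOf s ≠ 1 := fun h => hs1 (orderOf_eq_one_iff.1 h)
    omega
  have hΩ1 : Ω (Nat.card H₁) = 1 := by
    have := omega_one_le hord2
    omega
  rw [← hord]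
  exact cardFactors_eq_one_iff_prime.1 hΩ1
end
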